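/- Let r ≥ 3, and let Σ_{2r−1} and Σ_{2r−2} be the subcomplexes of (M_r)^{*2}_Δ generated by the facets of dimension 2r−1 and 2r−2, respectively. Then every face of (M_r)^{*2}_Δ lies in Σ_{2r−1} or Σ_{2r−2}; i.e., every facet of (M_r)^{*2}_Δ has dimension 2r−1 or 2r−2. -/

import Mathlib

/-- Independence in the matroid `M_r` (ground set `Fin r × Fin r`; `(i,j)` is `v_{i+1}^{j+1}`
for `i < r-1` and `w_{j+1}` for `i = r-1`). -/
def MrIndep (r : ℕ) (A : Finset (Fin r × Fin r)) : Prop :=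
  A.card ≤ r ∧ ∀ i : Fin r, (i : ℕ) < r - 1 → (A.filter (fun p => p.1 = i)).card ≤ 1

/-- A face of the `2`-fold deleted join `(M_r)^{*2}_Δ`. -/
def Face2 (r : ℕ) (p : Finset (Fin r × Fin r) × Finset (Fin r × Fin r)) : Prop :=
  MrIndep r p.1 ∧ MrIndep r p.2 ∧ Disjoint p.1 p.2

/-- A facet of `(M_r)^{*2}_Δ`: a face maximal under componentwise inclusion. -/
def Facet2 (r : ℕ) (p : Finset (Fin r × Fin r) × Finset (Fin r × Fin r)) : Prop :=
  Face2 r p ∧ ∀ q, Face2 r q → p.1 ⊆ q.1 → p.2 ⊆ q.2 → q = p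

/-!
Let `(A, B)` be a facet with `|A| < r`. Since `A` has room left, maximality forces every row of
`M_r` that is missing from `A` to be blocked: each of the `r - 1` restricted rows has `r ≥ 3`
cells of which `A ∪ B` covers at most two, so a free cell exists and `A` must already meet that
row; and every cell of the unrestricted last row must lie in `A ∪ B`. Counting, `A` has exactly one
element in each restricted row and none in the last one, so the whole last row lies in `B`, giving
`|A| + |B| ≥ (r - 1) + r`. If instead both `|A|` and `|B|` reach `r`, the sum is `2r`.
-/

namespace MrIndep

variable {r : ℕ} {A B : Finset (Fin r × Fin r)}

theorem insert (hA : MrIndep r A) (hcard : A.card < r) {x : Fin r × Fin r}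
    (hx : (x.1 : ℕ) < r - 1 → ∀ y ∈ A, y.1 ≠ x.1) : MrIndep r (insert x A) := by
  refine ⟨(Finset.card_insert_le x A).trans hcard, fun i hi => ?_⟩
  rw [Finset.filter_insert]
  split_ifs with hxi
  · subst hxi
    have hrow : A.filter (fun p => p.1 = x.1) = ∅ :=
      Finset.filter_eq_empty_iff.mpr (hx hi)
    simp [hrow]
  · exact hA.2 i hi

theorem exists_notMem_row (hr : 3 ≤ r) (hA : MrIndep r A) (hB : MrIndep r B) {i : Fin r}
    (hi : (i : ℕ) < r - 1) : ∃ j, (i, j) ∉ A ∧ (i, j) ∉ B := by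
  have hcovered : ((A ∪ B).filter (fun p => p.1 = i)).card ≤ 2 := by
    rw [Finset.filter_union]
    have := hA.2 i hi
    have := hB.2 i hi
    have := Finset.card_union_le (A.filter (fun p => p.1 = i)) (B.filter (fun p => p.1 = i))
    omega
  have hrow : (Finset.univ.image (fun j : Fin r => (i, j))).card = r := by
    rw [Finset.card_image_of_injective _ (Prod.mk_right_injective i)]
    simp
  obtain ⟨_, hmem, hfree⟩ :=
    Finset.exists_mem_notMem_of_card_lt_card (hcovered.trans_lt (by omega) |>.trans_eq hrow.symm)
  obtain ⟨j, -, rfl⟩ := Finset.mem_image.mp hmem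
  exact ⟨j, by simpa using hfree⟩

end MrIndep

namespace Facet2

variable {r : ℕ} {p : Finset (Fin r × Fin r) × Finset (Fin r × Fin r)}

theorem swap (hp : Facet2 r p) : Facet2 r p.swap := by
  obtain ⟨⟨hA, hB, hd⟩, hmax⟩ := hp
  refine ⟨⟨hB, hA, hd.symm⟩, fun q hq h1 h2 => ?_⟩
  have := hmax q.swap ⟨hq.2.1, hq.1, hq.2.2.symm⟩ h2 h1
  rw [← Prod.swap_swap q, this]

theorem not_mrIndep_insert_fst (hp : Facet2 r p) {x : Fin r × Fin r} (hx₁ : x ∉ p.1)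
    (hx₂ : x ∉ p.2) : ¬ MrIndep r (insert x p.1) := fun hind => by
  have hface : Face2 r (insert x p.1, p.2) :=
    ⟨hind, hp.1.2.1, Finset.disjoint_insert_left.mpr ⟨hx₂, hp.1.2.2⟩⟩
  have := congrArg Prod.fst (hp.2 _ hface (Finset.subset_insert x p.1) subset_rfl)
  exact hx₁ (this ▸ Finset.mem_insert_self x p.1)

theorem exists_mem_fst_row (hr : 3 ≤ r) (hp : Facet2 r p) (hcard : p.1.card < r) {i : Fin r}
    (hi : (i : ℕ) < r - 1) : ∃ y ∈ p.1, y.1 = i := by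
  obtain ⟨j, hj₁, hj₂⟩ := MrIndep.exists_notMem_row hr hp.1.1 hp.1.2.1 hi
  by_contra! hrow
  exact hp.not_mrIndep_insert_fst hj₁ hj₂ (hp.1.1.insert hcard fun _ => hrow)

theorem image_fst_fst (hr : 3 ≤ r) (hp : Facet2 r p) (hcard : p.1.card < r) :
    p.1.image Prod.fst = Finset.univ.erase ⟨r - 1, by omega⟩ := by
  have hrestricted : ∀ i : Fin r, (i : ℕ) < r - 1 → i ∈ p.1.image Prod.fst := fun i hi => by
    obtain ⟨y, hy, rfl⟩ := hp.exists_mem_fst_row hr hcard hi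
    exact Finset.mem_image_of_mem _ hy
  have hlast : (⟨r - 1, by omega⟩ : Fin r) ∉ p.1.image Prod.fst := fun hL => by
    have huniv : p.1.image Prod.fst = Finset.univ := Finset.eq_univ_iff_forall.mpr fun i => by
      by_cases hi : (i : ℕ) < r - 1
      · exact hrestricted i hi
      · rwa [show i = ⟨r - 1, by omega⟩ from Fin.ext (show (i : ℕ) = r - 1 by omega)]
    have hcard_image := congrArg Finset.card huniv
    rw [Finset.card_univ, Fintype.card_fin] at hcard_image
    have := Finset.card_image_le (s := p.1) (f := Prod.fst)
    omega
  ext i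
  by_cases hi : (i : ℕ) < r - 1
  · simp only [hrestricted i hi, Finset.mem_erase, Finset.mem_univ, and_true, true_iff]
    exact fun h => by simp [h] at hi
  · rw [show i = ⟨r - 1, by omega⟩ from Fin.ext (show (i : ℕ) = r - 1 by omega)]
    simpa using hlast

theorem two_mul_sub_one_le_card_add_card (hr : 3 ≤ r) (hp : Facet2 r p)
    (hcard : p.1.card < r) : 2 * r - 1 ≤ p.1.card + p.2.card := by
  set L : Fin r := ⟨r - 1, by omega⟩
  have himage := hp.image_fst_fst hr hcard
  have hfst : r - 1 ≤ p.1.card := by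
    have := Finset.card_image_le (s := p.1) (f := Prod.fst)
    rw [himage, Finset.card_erase_of_mem (Finset.mem_univ L)] at this
    simpa using this
  have hsnd : Finset.univ.image (fun j : Fin r => (L, j)) ⊆ p.2 := by
    intro x hx
    obtain ⟨j, -, rfl⟩ := Finset.mem_image.mp hx
    have hL₁ : (L, j) ∉ p.1 := fun h => by
      have hL := Finset.mem_image_of_mem Prod.fst h
      rw [himage] at hL
      exact Finset.notMem_erase L _ hL
    by_contra hL₂
    exact hp.not_mrIndep_insert_fst hL₁ hL₂ (hp.1.1.insert hcard fun h => by simp [L] at h)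
  have := Finset.card_le_card hsnd
  rw [Finset.card_image_of_injective _ (Prod.mk_right_injective L)] at this
  simp only [Finset.card_univ, Fintype.card_fin] at this
  omega

end Facet2

/-- Every facet of `(M_r)^{*2}_Δ` has cardinality `2r-1` or `2r`, i.e. every face lies in
the subcomplex generated by the facets of dimension `2r-1` or in the one generated by the
facets of dimension `2r-2`. -/
theorem stmt15 (r : ℕ) (hr : 3 ≤ r) :
    ∀ p : Finset (Fin r × Fin r) × Finset (Fin r × Fin r),
      Facet2 r p → p.1.card + p.2.card = 2 * r - 1 ∨ p.1.card + p.2.card = 2 * r := by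
  intro p hp
  have hA := hp.1.1.1
  have hB := hp.1.2.1.1
  by_cases hA' : p.1.card < r
  · have := hp.two_mul_sub_one_le_card_add_card hr hA'
    omega
  by_cases hB' : p.2.card < r
  · have := hp.swap.two_mul_sub_one_le_card_add_card hr hB'
    simp only [Prod.fst_swap, Prod.snd_swap] at this
    omega
  omega
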